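/- arXiv:1410.3701 — 7 statements merged into one kernel-verified Lean document; each statement's English description precedes it below -/
import Mathlib

section
/- Let q be a prime power and L(t) ∈ F_q[t] a polynomial. Define the map φ : F_q² → F_q² by φ(s,t) = (s, s·t + L(t)). Then the image E of φ satisfies |E| ≥ q³/(2q - 1), and in particular |E| ≥ q²/2. -/
/-!
By Cauchy–Schwarz on the fibre sizes of `φ`, `|F_q²|² ≤ |E| · C`, where `C` is the number of
ordered pairs of points with the same image. Two points `(s, t)`, `(s', t')` collide iff `s = s'`
and `s (t - t') = L(t') - L(t)`: for `t = t'` every `s` works, for `t ≠ t'` exactly one does, so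
`C = q · q + (q² - q) = q (2q - 1)` and `|E| ≥ q⁴ / (q (2q - 1))`.
-/

open Finset

section Collisions

variable {α β : Type*} [Fintype α] [DecidableEq β]

def collisions (f : α → β) : Finset (α × α) := {p | f p.1 = f p.2}

theorem card_collisions_eq_sum_sq (f : α → β) :
    #(collisions f) = ∑ e ∈ univ.image f, #{a | f a = e} ^ 2 := by
  rw [card_eq_sum_card_fiberwise (f := fun p => f p.1) (t := univ.image f)
    fun p _ => mem_image_of_mem f (mem_univ p.1)]
  refine sum_congr rfl fun e _ => ?_
  rw [sq, ← card_product]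
  congr 1
  ext ⟨a, b⟩
  simp only [collisions, mem_filter, mem_univ, true_and, mem_product]
  constructor
  · rintro ⟨hab, rfl⟩
    exact ⟨rfl, hab.symm⟩
  · rintro ⟨rfl, hb⟩
    exact ⟨hb.symm, rfl⟩

theorem card_sq_le_card_image_mul_card_collisions (f : α → β) :
    Fintype.card α ^ 2 ≤ #(univ.image f) * #(collisions f) := by
  rw [card_collisions_eq_sum_sq, ← card_univ,
    card_eq_sum_card_fiberwise fun a _ => mem_image_of_mem f (mem_univ a)]
  exact sq_sum_le_card_mul_sum_sq

end Collisions

section LinearFamily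

variable {F : Type*} [Field F] [Fintype F] [DecidableEq F]

theorem card_filter_mul_add_eq_mul_add (g : F → F) (t t' : F) :
    #{s : F | s * t + g t = s * t' + g t'} = if t' = t then Fintype.card F else 1 := by
  split_ifs with h
  · simp [h]
  · rw [card_eq_one]
    refine ⟨(g t' - g t) / (t - t'), ?_⟩
    ext s
    simp only [mem_filter, mem_univ, true_and, mem_singleton,
      eq_div_iff (sub_ne_zero.mpr (Ne.symm h))]
    constructor <;> intro hs <;> linear_combination hs

theorem card_collisions_mul_add (g : F → F) :
    #(collisions fun st : F × F => (st.1, st.1 * st.2 + g st.2))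
      = Fintype.card F * (2 * Fintype.card F - 1) := by
  rw [card_eq_sum_card_fiberwise (f := fun p => (p.1.2, p.2.2)) (t := univ) fun _ _ => mem_univ _]
  have hfiber : ∀ tt : F × F,
      #{p ∈ collisions fun st : F × F => (st.1, st.1 * st.2 + g st.2) | (p.1.2, p.2.2) = tt}
        = #{s : F | s * tt.1 + g tt.1 = s * tt.2 + g tt.2} := by
    rintro ⟨t, t'⟩
    rw [eq_comm, ← card_map ⟨fun s => ((s, t), (s, t')), fun s s' h => by simpa using h⟩]
    refine congrArg card ?_
    ext ⟨⟨s, u⟩, ⟨s', u'⟩⟩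
    simp only [collisions, mem_filter, mem_univ, true_and, mem_map, Prod.mk.injEq]
    constructor
    · rintro ⟨s, h, rfl, rfl, rfl, rfl⟩
      exact ⟨⟨rfl, h⟩, rfl, rfl⟩
    · rintro ⟨⟨rfl, h⟩, rfl, rfl⟩
      exact ⟨s, h, rfl⟩
  have hrow : ∀ t : F,
      ∑ t' : F, (if t' = t then Fintype.card F else 1) = 2 * Fintype.card F - 1 := by
    intro t
    rw [sum_ite, filter_eq', filter_ne', if_pos (mem_univ t), sum_const, sum_const,
      card_singleton, card_erase_of_mem (mem_univ t), card_univ]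
    have := Fintype.card_pos (α := F)
    simp only [smul_eq_mul]
    omega
  simp only [hfiber, card_filter_mul_add_eq_mul_add, Fintype.sum_prod_type, hrow, sum_const,
    card_univ, smul_eq_mul]

end LinearFamily

/-- For a finite field `F_q` and `L ∈ F_q[t]`, the image `E` of
`φ(s,t) = (s, s·t + L(t))` satisfies `|E| ≥ q³/(2q-1)`; in particular `|E| ≥ q²/2`. -/
theorem stmt3 (F : Type*) [Field F] [Fintype F] (L : Polynomial F) :
    let q : ℕ := Fintype.card F
    let E : Set (F × F) := Set.range (fun st : F × F => (st.1, st.1 * st.2 + L.eval st.2))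
    (Nat.card E : ℝ) ≥ (q : ℝ) ^ 3 / (2 * q - 1) ∧ (Nat.card E : ℝ) ≥ (q : ℝ) ^ 2 / 2 := by
  classical
  intro q E
  have hE : Nat.card E = #(univ.image fun st : F × F => (st.1, st.1 * st.2 + L.eval st.2)) := by
    rw [Nat.card_coe_set_eq, Set.ncard_eq_toFinset_card', Set.toFinset_range]
  have hCS := card_sq_le_card_image_mul_card_collisions
    fun st : F × F => (st.1, st.1 * st.2 + L.eval st.2)
  rw [card_collisions_mul_add (g := fun t => L.eval t), Fintype.card_prod, ← hE] at hCS
  change (q * q) ^ 2 ≤ Nat.card E * (q * (2 * q - 1)) at hCS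
  have hq : 1 ≤ q := Fintype.card_pos
  have hCSℝ : (q : ℝ) * q ^ 3 ≤ q * (Nat.card E * (2 * q - 1)) := by
    have := (Nat.cast_le (α := ℝ)).mpr hCS
    push_cast [Nat.cast_sub (by omega : 1 ≤ 2 * q)] at this
    linear_combination this
  have hqℝ : (1 : ℝ) ≤ q := by exact_mod_cast hq
  have hbound : (q : ℝ) ^ 3 / (2 * q - 1) ≤ Nat.card E := by
    rw [div_le_iff₀ (by linarith)]
    exact le_of_mul_le_mul_left hCSℝ (by linarith)
  refine ⟨hbound, le_trans ?_ hbound⟩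
  rw [div_le_div_iff₀ two_pos (by linarith)]
  nlinarith
end

section
/- Let q = p^n with p an odd prime, and let f(x) ∈ F_q[x] be a linearized polynomial (f(x) = Σ aᵢ x^{p^i} + f(0)). Then the number of a ∈ F_q for which x ↦ f(x) + a·x is not a bijection of F_q is at most (q-1)/(p-1). In particular, for at least ((p-2)/(p-1))·q values of a, f(x) + a·x is a permutation polynomial of F_q. -/
open Polynomial Finset Function

/-! The linearized part `g` of `f` is additive, so `x ↦ f(x) + a x` fails to be a bijection exactly
when `g(z) + a z = 0` for some `z ≠ 0`, i.e. when `a = -g(z)/z`. As `g` is `𝔽_p`-linear, `-g(z)/z`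
takes the same value at the `p - 1` points `k z`, `k ∈ 𝔽_p^*`, so these "bad" values of `a` number
at most `(q - 1)/(p - 1)`. -/

section Linearized

variable {R : Type*} [CommSemiring R] (p : ℕ) [ExpChar R p]

def linearizedHom (m : ℕ) (a : ℕ → R) : R →+ R :=
  ∑ i ∈ range m, a i • (iterateFrobenius R p i).toAddMonoidHom

theorem eval_sum_C_mul_X_pow_pow (m : ℕ) (a : ℕ → R) (x : R) :
    (∑ i ∈ range m, C (a i) * X ^ p ^ i).eval x = linearizedHom p m a x := by
  simp [linearizedHom, eval_finsetSum, iterateFrobenius_def]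

end Linearized

theorem exists_ne_zero_of_not_bijective {R : Type*} [CommRing R] [Finite R] (g : R →+ R) {c a : R}
    (h : ¬ Bijective fun x => g x + c + a * x) : ∃ z ≠ 0, g z + a * z = 0 := by
  rw [← Finite.injective_iff_bijective, not_injective_iff] at h
  obtain ⟨x, y, hxy, hne⟩ := h
  refine ⟨x - y, sub_ne_zero.mpr hne, ?_⟩
  rw [map_sub]
  linear_combination hxy

section Field

variable {F : Type*} [Field F] (g : F →+ F)

theorem neg_map_natCast_mul_div {k : ℕ} (hk : (k : F) ≠ 0) (z : F) :
    -g (k * z) / (k * z) = -g z / z := by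
  rw [← nsmul_eq_mul, map_nsmul, nsmul_eq_mul, nsmul_eq_mul, ← mul_neg, mul_div_mul_left _ _ hk]

section DecidableEq

variable [DecidableEq F]

theorem mem_image_neg_div_of_not_bijective [Fintype F] {c a : F}
    (h : ¬ Bijective fun x => g x + c + a * x) : a ∈ ({0}ᶜ : Finset F).image (fun z => -g z / z) := by
  obtain ⟨z, hz, hza⟩ := exists_ne_zero_of_not_bijective g h
  refine mem_image.mpr ⟨z, by simpa using hz, ?_⟩
  rw [div_eq_iff hz]
  linear_combination -hza

theorem sub_one_mul_card_image_neg_div_le (p : ℕ) [CharP F p] [Fintype F] :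
    (p - 1) * #(({0}ᶜ : Finset F).image fun z => -g z / z) ≤ Fintype.card F - 1 := by
  rw [← card_singleton (0 : F), ← card_compl]
  refine mul_card_image_le_card _ _ fun b hb => ?_
  obtain ⟨z, hz, rfl⟩ := mem_image.mp hb
  have hz0 : z ≠ 0 := by simpa using hz
  have hcast : ∀ k ∈ Ico 1 p, (k : F) ≠ 0 := fun k hk h => by
    have := Nat.le_of_dvd (mem_Ico.mp hk).1 ((CharP.cast_eq_zero_iff F p k).mp h)
    exact (mem_Ico.mp hk).2.not_ge this
  calc p - 1 = #((Ico 1 p).image fun k : ℕ => (k : F) * z) := by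
        rw [card_image_of_injOn, Nat.card_Ico]
        intro k hk j hj hkj
        exact CharP.natCast_injOn_Iio F p (mem_Ico.mp hk).2 (mem_Ico.mp hj).2
          (mul_right_cancel₀ hz0 hkj)
    _ ≤ _ := by
        refine card_le_card fun w hw => ?_
        obtain ⟨k, hk, rfl⟩ := mem_image.mp hw
        simp [hz0, hcast k hk, neg_map_natCast_mul_div g (hcast k hk)]

end DecidableEq

theorem ncard_not_bijective_mul_le (p : ℕ) [CharP F p] [Finite F] (c : F) :
    {a : F | ¬ Bijective fun x => g x + c + a * x}.ncard * (p - 1) ≤ Nat.card F - 1 := by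
  classical
  have := Fintype.ofFinite F
  calc _ ≤ #(({0}ᶜ : Finset F).image fun z => -g z / z) * (p - 1) := by
        gcongr
        rw [← Set.ncard_coe_finset]
        exact Set.ncard_le_ncard fun a ha => mem_image_neg_div_of_not_bijective g ha
    _ ≤ Nat.card F - 1 := by
        rw [mul_comm, Nat.card_eq_fintype_card]
        exact sub_one_mul_card_image_neg_div_le g p

end Field

theorem cast_le_div_and_cast_ge_of_mul_sub_one_le {s t q p : ℕ} (hq : 1 ≤ q) (hp : 1 < p)
    (hst : s + t = q) (h : s * (p - 1) ≤ q - 1) :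
    (s : ℝ) ≤ (q - 1) / (p - 1) ∧ (t : ℝ) ≥ (p - 2) / (p - 1) * q := by
  have hp' : (0 : ℝ) < p - 1 := by
    rw [sub_pos]; exact_mod_cast hp
  have hs : (s : ℝ) * (p - 1) ≤ q - 1 := by
    have := (Nat.cast_le (α := ℝ)).mpr h
    rwa [Nat.cast_mul, Nat.cast_sub hq, Nat.cast_sub hp.le, Nat.cast_one] at this
  have ht : (t : ℝ) = q - s := by
    rw [← hst, Nat.cast_add]; ring
  refine ⟨(le_div_iff₀ hp').mpr hs, ?_⟩
  rw [ge_iff_le, div_mul_eq_mul_div, div_le_iff₀ hp', ht]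
  linarith

theorem stmt5_general (p : ℕ) (hp : p.Prime)
    (F : Type*) [Field F] [Fintype F] [CharP F p]
    (f : Polynomial F)
    (hf : ∃ (m : ℕ) (a : ℕ → F),
      f = (∑ i ∈ Finset.range m, C (a i) * X ^ (p ^ i)) + C (f.coeff 0)) :
    (Nat.card {a : F | ¬ Function.Bijective (fun x : F => f.eval x + a * x)} : ℝ)
        ≤ ((Fintype.card F : ℝ) - 1) / (p - 1) ∧
    (Nat.card {a : F | Function.Bijective (fun x : F => f.eval x + a * x)} : ℝ)
        ≥ ((p : ℝ) - 2) / ((p : ℝ) - 1) * Fintype.card F := by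
  have : Fact p.Prime := ⟨hp⟩
  obtain ⟨m, c, hfa⟩ := hf
  have heval : ∀ x, f.eval x = linearizedHom p m c x + f.coeff 0 := fun x => by
    conv_lhs => rw [hfa]
    rw [eval_add, eval_C, eval_sum_C_mul_X_pow_pow]
  simp only [heval, Nat.card_coe_set_eq]
  have hbad := ncard_not_bijective_mul_le (linearizedHom p m c) p (f.coeff 0)
  have hsum := Set.ncard_add_ncard_compl
    {a : F | ¬ Bijective fun x => linearizedHom p m c x + f.coeff 0 + a * x}
  simp only [Set.compl_ofPred, not_not] at hsum
  rw [Nat.card_eq_fintype_card] at hbad hsum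
  exact cast_le_div_and_cast_ge_of_mul_sub_one_le Fintype.card_pos hp.one_lt hsum hbad

/-- For `F_q` of odd characteristic `p` and a linearized polynomial `f`, the number of
`a ∈ F_q` such that `x ↦ f(x) + a·x` is not a bijection is at most `(q-1)/(p-1)`;
in particular at least `((p-2)/(p-1))·q` values of `a` give a permutation. -/
theorem stmt5 (p n : ℕ) (hp : p.Prime) (hodd : Odd p)
    (F : Type*) [Field F] [Fintype F] [CharP F p] (hq : Fintype.card F = p ^ n)
    (f : Polynomial F)
    (hf : ∃ (m : ℕ) (a : ℕ → F),
      f = (∑ i ∈ Finset.range m, C (a i) * X ^ (p ^ i)) + C (f.coeff 0)) :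
    (Nat.card {a : F | ¬ Function.Bijective (fun x : F => f.eval x + a * x)} : ℝ)
        ≤ ((Fintype.card F : ℝ) - 1) / (p - 1) ∧
    (Nat.card {a : F | Function.Bijective (fun x : F => f.eval x + a * x)} : ℝ)
        ≥ ((p : ℝ) - 2) / ((p : ℝ) - 1) * Fintype.card F :=
  stmt5_general p hp F f hf
end

section
/- Let q be a prime power with q = p^n, p ≥ 5, and let f ∈ F_q[x] be a linearized polynomial with f(0) = 0. Let B = {s ∈ F_q : x ↦ f(x) + s·x is not a bijection of F_q} and let B' = F_q \ (B ∪ (-B)). Then for every (s, β, γ) ∈ B' × F_q × F_q, there exist t₁, t₂ ∈ F_q with (s, s·t₁ + f(t₂), s·t₂ + f(t₁)) = (s, β, γ). Consequently the image of the map (s,t₁,t₂) ↦ (s, st₁+f(t₂), st₂+f(t₁)) on F_q³ has size at least |B'|·q². -/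
open Polynomial

/-- For `p ≥ 5`, `f` linearized with `f(0) = 0`, and `B'` the set of `s` with both
`f(x)+sx` and `f(x)-sx` permutations, every point of `B' × F_q × F_q` is in the image of
`(s,t₁,t₂) ↦ (s, st₁+f(t₂), st₂+f(t₁))`; hence the image has size at least `|B'|·q²`. -/
theorem stmt8 (p n : ℕ) (hp : p.Prime) (hp5 : 5 ≤ p)
    (F : Type*) [Field F] [Fintype F] [CharP F p] (hq : Fintype.card F = p ^ n)
    (f : Polynomial F) (hf0 : f.eval 0 = 0)
    (hf : ∃ (m : ℕ) (a : ℕ → F), f = ∑ i ∈ Finset.range m, C (a i) * X ^ (p ^ i)) :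
    let B : Set F := {s | ¬ Function.Bijective (fun x : F => f.eval x + s * x)}
    let B' : Set F := (B ∪ (-B))ᶜ
    let φ : F × F × F → F × F × F :=
      fun v => (v.1, v.1 * v.2.1 + f.eval v.2.2, v.1 * v.2.2 + f.eval v.2.1)
    (∀ s ∈ B', ∀ β γ : F, ∃ t₁ t₂ : F,
        s * t₁ + f.eval t₂ = β ∧ s * t₂ + f.eval t₁ = γ) ∧
    Nat.card B' * (Fintype.card F) ^ 2 ≤ Nat.card (Set.range φ) := by
  intro B B' φ
  haveI := Fact.mk hp
  -- additivity of f
  have hadd : ∀ x y : F, f.eval (x + y) = f.eval x + f.eval y := by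
    obtain ⟨m, a, rfl⟩ := hf
    intro x y
    simp only [eval_finset_sum, eval_mul, eval_C, eval_pow, eval_X]
    rw [← Finset.sum_add_distrib]
    refine Finset.sum_congr rfl fun i _ => ?_
    rw [add_pow_char_pow, mul_add]
  have h2 : (2 : F) ≠ 0 := by
    have : ((2 : ℕ) : F) ≠ 0 := by
      rw [Ne, CharP.cast_eq_zero_iff F p]
      intro hd
      have := Nat.le_of_dvd (by norm_num) hd
      omega
    simpa using this
  have main : ∀ s ∈ B', ∀ β γ : F, ∃ t₁ t₂ : F,
      s * t₁ + f.eval t₂ = β ∧ s * t₂ + f.eval t₁ = γ := by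
    intro s hs β γ
    have hs' : s ∉ B ∧ s ∉ -B := by
      simpa [B', Set.mem_union, not_or] using hs
    have hbij1 : Function.Bijective (fun x : F => f.eval x + s * x) := by
      have := hs'.1; simpa [B] using this
    have hbij2 : Function.Bijective (fun x : F => f.eval x + (-s) * x) := by
      have := hs'.2
      simp only [Set.mem_neg, B, Set.mem_setOf_eq, not_not] at this
      exact this
    obtain ⟨u, hu⟩ := hbij1.2 (β + γ)
    obtain ⟨w, hw⟩ := hbij2.2 (β - γ)
    simp only at hu hw
    refine ⟨(u - w) / 2, (u + w) / 2, ?_, ?_⟩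
    · have hft2 : 2 * f.eval ((u + w) / 2) = f.eval u + f.eval w := by
        have : f.eval ((u + w) / 2 + (u + w) / 2) = f.eval ((u + w) / 2) + f.eval ((u + w) / 2) :=
          hadd _ _
        have h' : (u + w) / 2 + (u + w) / 2 = u + w := by field_simp; ring
        rw [h', hadd] at this
        linear_combination -this
      have goal2 : 2 * (s * ((u - w) / 2) + f.eval ((u + w) / 2)) = 2 * β := by
        rw [mul_add, hft2]
        field_simp
        linear_combination hu + hw
      exact mul_left_cancel₀ h2 goal2
    · have hneg : f.eval (-w) = -f.eval w := by
        have := hadd w (-w)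
        simp [hf0] at this
        linear_combination -this
      have hft1 : 2 * f.eval ((u - w) / 2) = f.eval u - f.eval w := by
        have : f.eval ((u - w) / 2 + (u - w) / 2) = f.eval ((u - w) / 2) + f.eval ((u - w) / 2) :=
          hadd _ _
        have h' : (u - w) / 2 + (u - w) / 2 = u + (-w) := by field_simp; ring
        rw [h', hadd, hneg] at this
        linear_combination -this
      have goal2 : 2 * (s * ((u + w) / 2) + f.eval ((u - w) / 2)) = 2 * γ := by
        rw [mul_add, hft1]
        field_simp
        linear_combination hu - hw
      exact mul_left_cancel₀ h2 goal2
  refine ⟨main, ?_⟩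
  -- cardinality
  have hmem : ∀ (s : F), s ∈ B' → ∀ β γ : F, (s, β, γ) ∈ Set.range φ := by
    intro s hs β γ
    obtain ⟨t₁, t₂, h1, h2'⟩ := main s hs β γ
    exact ⟨(s, t₁, t₂), by simp [φ, h1, h2']⟩
  let ψ : ↥B' × F × F → ↥(Set.range φ) :=
    fun v => ⟨(v.1.1, v.2.1, v.2.2), hmem v.1.1 v.1.2 v.2.1 v.2.2⟩
  have hinj : Function.Injective ψ := by
    intro a b hab
    simp only [ψ, Subtype.mk_eq_mk, Prod.mk.injEq] at hab
    obtain ⟨h1, h2', h3⟩ := hab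
    exact Prod.ext (Subtype.ext h1) (Prod.ext h2' h3)
  have := Nat.card_le_card_of_injective ψ hinj
  simpa [Nat.card_prod, Nat.card_eq_fintype_card, mul_assoc, sq] using this
end

section
/- Let q = p^n with p ≥ 5 and f ∈ F_q[x] linearized with f(0)=0. With B = {s ∈ F_q : f(x)+sx is not a permutation of F_q}, the complement B' = F_q \ (B ∪ (-B)) satisfies |B'| ≥ ((p-3)/(p-1))·q. Hence the image of (s,t₁,t₂) ↦ (s, st₁+f(t₂), st₂+f(t₁)) on F_q³ has size at least ((p-3)/(p-1))·q³ ≥ q³/2. -/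
open Polynomial

/-- For `p ≥ 5` and `f` linearized with `f(0)=0`, `|B'| ≥ ((p-3)/(p-1))·q`, hence the image
of `(s,t₁,t₂) ↦ (s, st₁+f(t₂), st₂+f(t₁))` has size at least `((p-3)/(p-1))·q³ ≥ q³/2`. -/
theorem stmt9 (p n : ℕ) (hp : p.Prime) (hp5 : 5 ≤ p)
    (F : Type*) [Field F] [Fintype F] [CharP F p] (hq : Fintype.card F = p ^ n)
    (f : Polynomial F) (hf0 : f.eval 0 = 0)
    (hf : ∃ (m : ℕ) (a : ℕ → F), f = ∑ i ∈ Finset.range m, C (a i) * X ^ (p ^ i)) :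
    let q : ℕ := Fintype.card F
    let B : Set F := {s | ¬ Function.Bijective (fun x : F => f.eval x + s * x)}
    let B' : Set F := (B ∪ (-B))ᶜ
    let φ : F × F × F → F × F × F :=
      fun v => (v.1, v.1 * v.2.1 + f.eval v.2.2, v.1 * v.2.2 + f.eval v.2.1)
    (Nat.card B' : ℝ) ≥ ((p : ℝ) - 3) / ((p : ℝ) - 1) * q ∧
    (Nat.card (Set.range φ) : ℝ) ≥ ((p : ℝ) - 3) / ((p : ℝ) - 1) * q ^ 3 ∧
    ((p : ℝ) - 3) / ((p : ℝ) - 1) * q ^ 3 ≥ (q : ℝ) ^ 3 / 2 := by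
  intro q B B' φ
  classical
  haveI := Fact.mk hp
  obtain ⟨m, a, hfa⟩ := hf
  -- additivity of f
  have hadd : ∀ x y : F, f.eval (x + y) = f.eval x + f.eval y := by
    intro x y
    rw [hfa]
    simp only [eval_finset_sum, eval_mul, eval_C, eval_pow, eval_X]
    rw [← Finset.sum_add_distrib]
    refine Finset.sum_congr rfl fun i _ => ?_
    rw [add_pow_char_pow, mul_add]
  have hsub : ∀ x y : F, f.eval (x - y) = f.eval x - f.eval y := by
    intro x y
    have h := hadd (x - y) y
    rw [sub_add_cancel] at h
    linear_combination -h
  -- prime field scalars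
  set ι : ZMod p →+* F := ZMod.castHom dvd_rfl F with hι
  have hιinj : Function.Injective ι := ι.injective
  have hpowc : ∀ (c : ZMod p) (i : ℕ), (ι c) ^ (p ^ i) = ι c := by
    intro c i
    rw [← map_pow]
    congr 1
    induction i with
    | zero => simp
    | succ k ih => rw [pow_succ, pow_mul, ih, ZMod.pow_card]
  have hsmul : ∀ (c : ZMod p) (x : F), f.eval (ι c * x) = ι c * f.eval x := by
    intro c x
    rw [hfa]
    simp only [eval_finset_sum, eval_mul, eval_C, eval_pow, eval_X]
    rw [Finset.mul_sum]
    refine Finset.sum_congr rfl fun i _ => ?_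
    rw [mul_pow, hpowc]
    ring
  have hchar2 : (2 : F) ≠ 0 := by
    intro h
    have h2 : ((2 : ℕ) : F) = 0 := by push_cast; exact h
    have := (CharP.cast_eq_zero_iff F p 2).mp h2
    have := Nat.le_of_dvd (by norm_num) this
    omega
  -- bad s has nontrivial kernel
  have hker : ∀ s : F, s ∈ B → ∃ x : F, x ≠ 0 ∧ f.eval x + s * x = 0 := by
    intro s hs
    by_contra h
    push_neg at h
    apply hs
    rw [← Finite.injective_iff_bijective]
    intro x y hxy
    by_contra hne
    refine h (x - y) (sub_ne_zero.mpr hne) ?_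
    simp only at hxy
    rw [hsub]
    linear_combination hxy
  -- counting
  set g : F → F := fun x => -f.eval x / x with hg
  set T : Finset F := Finset.univ.filter (fun x : F => x ≠ 0) with hT
  set S : Finset F := T.image g with hS
  have hTcard : T.card = q - 1 := by
    rw [hT, Finset.filter_ne', Finset.card_erase_of_mem (Finset.mem_univ _),
      Finset.card_univ]
  have hfiber : ∀ s ∈ S, p - 1 ≤ (T.filter (fun x => g x = s)).card := by
    intro s hs
    obtain ⟨x₀, hx₀T, hgx₀⟩ := Finset.mem_image.mp hs
    have hx₀ : x₀ ≠ 0 := (Finset.mem_filter.mp hx₀T).2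
    set Tp : Finset (ZMod p) := Finset.univ.filter (fun c : ZMod p => c ≠ 0) with hTp
    have hinj : Function.Injective (fun c : ZMod p => ι c * x₀) := by
      intro c d h
      simp only at h
      exact hιinj (mul_right_cancel₀ hx₀ h)
    have hsubset : Tp.image (fun c : ZMod p => ι c * x₀) ⊆ T.filter (fun x => g x = s) := by
      intro y hy
      obtain ⟨c, hc, rfl⟩ := Finset.mem_image.mp hy
      have hc0 : c ≠ 0 := (Finset.mem_filter.mp hc).2
      have hιc : ι c ≠ 0 := fun h => hc0 (hιinj (by simpa using h))
      refine Finset.mem_filter.mpr ⟨Finset.mem_filter.mpr ⟨Finset.mem_univ _, mul_ne_zero hιc hx₀⟩, ?_⟩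
      rw [hg]
      simp only
      rw [hsmul, ← hgx₀, hg]
      simp only
      rw [neg_mul_eq_mul_neg, mul_div_mul_left _ _ hιc]
    have hTpcard : Tp.card = p - 1 := by
      rw [hTp, Finset.filter_ne', Finset.card_erase_of_mem (Finset.mem_univ _),
        Finset.card_univ, ZMod.card]
    calc p - 1 = (Tp.image (fun c : ZMod p => ι c * x₀)).card := by
          rw [Finset.card_image_of_injective _ hinj, hTpcard]
      _ ≤ _ := Finset.card_le_card hsubset
  have hScount : S.card * (p - 1) ≤ q - 1 := by
    rw [← hTcard, Finset.card_eq_sum_card_fiberwise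
      (f := g) (t := S) (fun x hx => Finset.mem_image_of_mem g hx)]
    calc S.card * (p - 1) = ∑ _s ∈ S, (p - 1) := by
          rw [Finset.sum_const, smul_eq_mul]
      _ ≤ _ := Finset.sum_le_sum hfiber
  have hBsub : B ⊆ (S : Set F) := by
    intro s hs
    obtain ⟨x, hx, hxe⟩ := hker s hs
    refine Finset.mem_coe.mpr (Finset.mem_image.mpr
      ⟨x, Finset.mem_filter.mpr ⟨Finset.mem_univ x, hx⟩, ?_⟩)
    rw [hg]
    simp only
    rw [div_eq_iff hx]
    linear_combination -hxe
  have hBcard : Nat.card B ≤ S.card := by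
    rw [Nat.card_coe_set_eq]
    calc B.ncard ≤ (S : Set F).ncard := Set.ncard_le_ncard hBsub (Set.toFinite _)
      _ = S.card := Set.ncard_coe_finset S
  have hnegB : (-B : Set F) = (fun x : F => -x) '' B := by
    ext x
    simp only [Set.mem_neg, Set.mem_image]
    constructor
    · intro h; exact ⟨-x, h, by ring⟩
    · rintro ⟨b, hb, rfl⟩; simpa using hb
  have hnegBcard : Nat.card (-B : Set F) = Nat.card B := by
    rw [Nat.card_coe_set_eq, Nat.card_coe_set_eq, hnegB,
      Set.ncard_image_of_injective _ neg_injective]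
  have hUcard : Nat.card (B ∪ -B : Set F) ≤ 2 * S.card := by
    rw [Nat.card_coe_set_eq]
    calc (B ∪ -B).ncard ≤ B.ncard + (-B : Set F).ncard := Set.ncard_union_le _ _
      _ ≤ S.card + S.card := by
          rw [← Nat.card_coe_set_eq, ← Nat.card_coe_set_eq]
          exact Nat.add_le_add hBcard (hnegBcard ▸ hBcard)
      _ = 2 * S.card := by ring
  have hcompl : (B ∪ -B : Set F).ncard + B'.ncard = q := by
    rw [Set.ncard_add_ncard_compl, Nat.card_eq_fintype_card]
  -- real versions
  have hq1 : 1 ≤ q := Fintype.card_pos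
  have hp1R : (0 : ℝ) < (p : ℝ) - 1 := by
    have : (5 : ℝ) ≤ (p : ℝ) := by exact_mod_cast hp5
    linarith
  have hSR : (S.card : ℝ) * ((p : ℝ) - 1) ≤ (q : ℝ) - 1 := by
    have := hScount
    have h5 : (1 : ℕ) ≤ p := by omega
    have : ((S.card * (p - 1) : ℕ) : ℝ) ≤ ((q - 1 : ℕ) : ℝ) := by exact_mod_cast this
    push_cast [Nat.cast_sub h5, Nat.cast_sub hq1] at this
    linarith
  have hUR : (Nat.card (B ∪ -B : Set F) : ℝ) ≤ 2 * S.card := by exact_mod_cast hUcard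
  have hB'R : (Nat.card B' : ℝ) = (q : ℝ) - Nat.card (B ∪ -B : Set F) := by
    have := hcompl
    rw [Nat.card_coe_set_eq, Nat.card_coe_set_eq]
    have : ((B ∪ -B : Set F).ncard : ℝ) + (B'.ncard : ℝ) = (q : ℝ) := by exact_mod_cast this
    linarith
  have goal1 : (Nat.card B' : ℝ) ≥ ((p : ℝ) - 3) / ((p : ℝ) - 1) * q := by
    rw [ge_iff_le, div_mul_eq_mul_div, div_le_iff₀ hp1R]
    have h1 : (Nat.card (B ∪ -B : Set F) : ℝ) * ((p : ℝ) - 1) ≤ 2 * ((q : ℝ) - 1) := by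
      nlinarith [hSR, hUR, hp1R]
    nlinarith [hB'R, h1, hp1R]
  -- injectivity of φ in (t₁,t₂) for s ∈ B'
  have hφinj : ∀ s : F, s ∈ B' → ∀ t t' : F × F,
      (s * t.1 + f.eval t.2, s * t.2 + f.eval t.1)
        = (s * t'.1 + f.eval t'.2, s * t'.2 + f.eval t'.1) → t = t' := by
    intro s hs t t' h
    have hs1 : Function.Bijective (fun x : F => f.eval x + s * x) := by
      have := fun h' => hs (Set.mem_union_left _ h')
      exact not_not.mp this
    have hs2 : Function.Bijective (fun x : F => f.eval x + (-s) * x) := by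
      have h' : -s ∉ B := fun hb => hs (Set.mem_union_right _ (Set.mem_neg.mpr (by simpa using hb)))
      exact not_not.mp h'
    have e1 : s * t.1 + f.eval t.2 = s * t'.1 + f.eval t'.2 := congrArg Prod.fst h
    have e2 : s * t.2 + f.eval t.1 = s * t'.2 + f.eval t'.1 := congrArg Prod.snd h
    set u : F := t.1 - t'.1 with hu
    set v : F := t.2 - t'.2 with hv
    have hfu : f.eval u = f.eval t.1 - f.eval t'.1 := hsub _ _
    have hfv : f.eval v = f.eval t.2 - f.eval t'.2 := hsub _ _
    have k1 : f.eval (u + v) + s * (u + v) = f.eval 0 + s * 0 := by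
      rw [hadd, hf0, hfu, hfv, hu, hv]
      linear_combination e1 + e2
    have huv : u + v = 0 := hs1.injective k1
    have k2 : f.eval (v - u) + (-s) * (v - u) = f.eval 0 + (-s) * 0 := by
      rw [hsub, hf0, hfu, hfv, hu, hv]
      linear_combination e1 - e2
    have hvu : v - u = 0 := hs2.injective k2
    have hu0 : u = 0 := by
      have h2 : 2 * u = 0 := by
        linear_combination huv - sub_eq_zero.mp hvu
      rcases mul_eq_zero.mp h2 with h | h
      · exact absurd h hchar2
      · exact h
    have hv0 : v = 0 := by rw [sub_eq_zero.mp hvu]; exact hu0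
    have ht1 : t.1 = t'.1 := sub_eq_zero.mp hu0
    have ht2 : t.2 = t'.2 := sub_eq_zero.mp hv0
    exact Prod.ext ht1 ht2
  have hcard2 : Nat.card B' * q * q ≤ Nat.card (Set.range φ) := by
    have hinj : Function.Injective
        (fun v : B' × F × F => (⟨φ (v.1.1, v.2), ⟨(v.1.1, v.2), rfl⟩⟩ : Set.range φ)) := by
      rintro ⟨⟨s, hs⟩, t⟩ ⟨⟨s', hs'⟩, t'⟩ h
      have h' : φ (s, t) = φ (s', t') := congrArg Subtype.val h
      have h1 : s = s' := congrArg Prod.fst h'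
      subst h1
      have h2 : (s * t.1 + f.eval t.2, s * t.2 + f.eval t.1)
          = (s * t'.1 + f.eval t'.2, s * t'.2 + f.eval t'.1) := congrArg Prod.snd h'
      have := hφinj s hs t t' h2
      simp [this]
    have := Nat.card_le_card_of_injective _ hinj
    rw [Nat.card_prod, Nat.card_prod, Nat.card_eq_fintype_card (α := F)] at this
    calc Nat.card B' * q * q = Nat.card B' * (q * q) := by ring
      _ ≤ _ := this
  have hqR : (0 : ℝ) ≤ (q : ℝ) := Nat.cast_nonneg q
  have goal2 : (Nat.card (Set.range φ) : ℝ) ≥ ((p : ℝ) - 3) / ((p : ℝ) - 1) * q ^ 3 := by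
    have h1 : ((Nat.card B' * q * q : ℕ) : ℝ) ≤ (Nat.card (Set.range φ) : ℝ) := by
      exact_mod_cast hcard2
    push_cast at h1
    have h2 : ((p : ℝ) - 3) / ((p : ℝ) - 1) * q * (q * q)
        ≤ (Nat.card B' : ℝ) * (q * q) := by
      apply mul_le_mul_of_nonneg_right goal1 (by positivity)
    calc ((p : ℝ) - 3) / ((p : ℝ) - 1) * q ^ 3
        = ((p : ℝ) - 3) / ((p : ℝ) - 1) * q * (q * q) := by ring
      _ ≤ (Nat.card B' : ℝ) * (q * q) := h2
      _ = (Nat.card B' : ℝ) * q * q := by ring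
      _ ≤ _ := h1
  refine ⟨goal1, goal2, ?_⟩
  have hhalf : (1 : ℝ) / 2 ≤ ((p : ℝ) - 3) / ((p : ℝ) - 1) := by
    rw [div_le_div_iff₀ (by norm_num) hp1R]
    have : (5 : ℝ) ≤ (p : ℝ) := by exact_mod_cast hp5
    linarith
  calc ((p : ℝ) - 3) / ((p : ℝ) - 1) * q ^ 3 ≥ 1 / 2 * q ^ 3 :=
        mul_le_mul_of_nonneg_right hhalf (by positivity)
    _ = (q : ℝ) ^ 3 / 2 := by ring
end

section
/- Let p be an odd prime and k an algebraically closed field of characteristic p. Let f ∈ k[x] with f(x) = x³ + a₂x² + a₁x + a₀ and p = 3. Suppose there exist Q ∈ k[t] with deg Q = 2 and λ(x,y) ∈ k[x,y] such that (x-y)²·(f(x)-f(y))/(x-y) = Q(λ(x,y)). Writing λ = λ₂ + λ₁ + λ₀ in homogeneous components, then λ₁ = 0. -/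
/-!
Restrict the identity `(x - y) (f x - f y) = Q (λ)` to the lines `t ↦ t • v`; the coefficient
of `t` in `λ (t • v)` is `λ₁ v`. On the diagonal `v = (1, 1)` the left side vanishes, so
`λ (t, t)` is a root of `Q` in `k[t]`, hence constant, and `λ₁ (1, 1) = 0`. On the antidiagonal
`v = (1, -1)` the left side is `4 (t⁴ + a₁ t²)`: it has degree 4, so `λ (t, -t)` has degree 2,
and it has no `t³` term, while the `t³`-coefficient of `Q (e₂ t² + e₁ t + e₀)` is `2 q₂ e₂ e₁`;
hence `λ₁ (1, -1) = e₁ = 0`. Since `2 ≠ 0`, a linear form vanishing at `(1, 1)` and `(1, -1)`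
is zero.
-/

open Polynomial MvPolynomial

namespace Polynomial

variable {R : Type*}

theorem natDegree_eq_zero_of_comp_eq_zero [Semiring R] [NoZeroDivisors R] {p q : R[X]}
    (hp : p.natDegree ≠ 0) (h : p.comp q = 0) : q.natDegree = 0 := by
  have := natDegree_comp (p := p) (q := q)
  rw [h, natDegree_zero, eq_comm, mul_eq_zero] at this
  exact this.resolve_left hp

theorem coeff_three_comp_of_degree_le_two [CommSemiring R] {p q : R[X]}
    (hp : p.degree ≤ 2) (hq : q.degree ≤ 2) :
    (p.comp q).coeff 3 = 2 * p.coeff 2 * q.coeff 2 * q.coeff 1 := by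
  have hq3 : q.coeff 3 = 0 := coeff_eq_zero_of_degree_lt (hq.trans_lt (by norm_num))
  conv_lhs => rw [eq_quadratic_of_degree_le_two hp]
  simp only [add_comp, mul_comp, C_comp, X_comp, X_pow_comp, coeff_add, coeff_C_mul, coeff_C,
    OfNat.ofNat_ne_zero, if_false, hq3]
  simp only [pow_two, coeff_mul, Finset.Nat.sum_antidiagonal_succ, Finset.Nat.antidiagonal_zero,
    Finset.sum_singleton, hq3]
  ring

theorem coeff_one_eq_zero_of_coeff_three_comp [CommSemiring R] [NoZeroDivisors R]
    (h2 : (2 : R) ≠ 0) {p q : R[X]} (hp : p.natDegree = 2) (hpq : (p.comp q).natDegree = 4)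
    (h3 : (p.comp q).coeff 3 = 0) : q.coeff 1 = 0 := by
  have hq : q.natDegree = 2 := by rw [natDegree_comp, hp] at hpq; omega
  have hp2 : p.coeff 2 ≠ 0 := by
    rw [← hp]; exact leadingCoeff_ne_zero.mpr (by rintro rfl; simp at hp)
  have hq2 : q.coeff 2 ≠ 0 := by
    rw [← hq]; exact leadingCoeff_ne_zero.mpr (by rintro rfl; simp at hq)
  rw [coeff_three_comp_of_degree_le_two (natDegree_le_iff_degree_le.mp hp.le)
    (natDegree_le_iff_degree_le.mp hq.le)] at h3
  simpa [h2, hp2, hq2] using h3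

end Polynomial

namespace MvPolynomial

variable {σ R : Type*}

noncomputable def restrictToLine [CommSemiring R] (v : σ → R) :
    MvPolynomial σ R →ₐ[R] R[X] :=
  aeval fun i => Polynomial.C (v i) * Polynomial.X

theorem restrictToLine_X [CommSemiring R] (v : σ → R) (i : σ) :
    restrictToLine v (X i) = Polynomial.C (v i) * Polynomial.X :=
  aeval_X _ _

theorem coeff_restrictToLine [CommSemiring R] (v : σ → R) (p : MvPolynomial σ R) (n : ℕ) :
    (restrictToLine v p).coeff n = eval v (homogeneousComponent n p) := by
  classical
  induction p using MvPolynomial.induction_on' with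
  | monomial s c =>
    rw [homogeneousComponent_of_mem (isHomogeneous_monomial c rfl), restrictToLine,
      aeval_monomial]
    simp only [Finsupp.prod, mul_pow, Finset.prod_mul_distrib, ← map_pow, ← map_prod,
      Finset.prod_pow_eq_pow_sum, ← Finsupp.degree_apply, Polynomial.algebraMap_eq]
    rw [← mul_assoc, ← map_mul, Polynomial.coeff_C_mul_X_pow]
    split_ifs <;> simp [eval_monomial, Finsupp.prod]
  | add p q hp hq => simp [hp, hq]

theorem homogeneousComponent_one_eq_sum [CommSemiring R] [Fintype σ] (p : MvPolynomial σ R) :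
    homogeneousComponent 1 p = ∑ i, C (coeff (Finsupp.single i 1) p) * X i := by
  classical
  ext m
  simp only [coeff_homogeneousComponent, coeff_sum, coeff_C_mul, coeff_X, mul_ite, mul_one,
    mul_zero]
  by_cases hm : m.degree = 1
  · obtain ⟨i, rfl⟩ : m ∈ Set.range (Finsupp.single · 1) := by
      rw [Finsupp.range_single_one]; exact hm
    simp [Finsupp.single_left_inj]
  · rw [if_neg hm, eq_comm]
    refine Finset.sum_eq_zero fun i _ => if_neg ?_
    rintro rfl
    simp at hm

theorem homogeneousComponent_one_eq_zero_of_eval [CommRing R] [NoZeroDivisors R]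
    (h2 : (2 : R) ≠ 0) (p : MvPolynomial (Fin 2) R)
    (hdiag : eval ![1, 1] (homogeneousComponent 1 p) = 0)
    (hanti : eval ![1, -1] (homogeneousComponent 1 p) = 0) :
    homogeneousComponent 1 p = 0 := by
  rw [homogeneousComponent_one_eq_sum, Fin.sum_univ_two] at hdiag hanti ⊢
  simp only [map_add, map_mul, eval_C, eval_X, Matrix.cons_val_zero, Matrix.cons_val_one,
    Matrix.cons_val_fin_one, mul_one, mul_neg] at hdiag hanti
  have h0 : coeff (Finsupp.single 0 1) p = 0 :=
    (mul_eq_zero.mp (by linear_combination hdiag + hanti)).resolve_left h2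
  have h1 : coeff (Finsupp.single 1 1) p = 0 :=
    (mul_eq_zero.mp (by linear_combination hdiag - hanti)).resolve_left h2
  simp [h0, h1]

end MvPolynomial

theorem stmt12_general (k : Type*) [Field k] [CharP k 3]
    (a₂ a₁ a₀ : k)
    (f : Polynomial k)
    (hf : f = Polynomial.X ^ 3 + Polynomial.C a₂ * Polynomial.X ^ 2
        + Polynomial.C a₁ * Polynomial.X + Polynomial.C a₀)
    (ft lam : MvPolynomial (Fin 2) k)
    (hft : (MvPolynomial.X 0 - MvPolynomial.X 1) * ft
        = Polynomial.aeval (MvPolynomial.X 0) f - Polynomial.aeval (MvPolynomial.X 1) f)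
    (Q : Polynomial k) (hQ : Q.natDegree = 2)
    (heq : (MvPolynomial.X 0 - MvPolynomial.X 1) ^ 2 * ft = Polynomial.aeval lam Q) :
    MvPolynomial.homogeneousComponent 1 lam = 0 := by
  have h2 : (2 : k) ≠ 0 := Ring.two_ne_zero (by rw [ringChar.eq k 3]; decide)
  have hcomp (v : Fin 2 → k) : Q.comp (restrictToLine v lam)
      = (Polynomial.C (v 0) * Polynomial.X - Polynomial.C (v 1) * Polynomial.X)
        * (f.comp (Polynomial.C (v 0) * Polynomial.X)
          - f.comp (Polynomial.C (v 1) * Polynomial.X)) := by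
    rw [comp_eq_aeval, Polynomial.aeval_algHom_apply, ← heq, sq, mul_assoc, hft]
    simp only [map_mul, map_sub, ← Polynomial.aeval_algHom_apply, restrictToLine_X,
      comp_eq_aeval]
  have hdiag : (restrictToLine ![1, 1] lam).coeff 1 = 0 := by
    refine coeff_eq_zero_of_natDegree_lt ?_
    rw [natDegree_eq_zero_of_comp_eq_zero (p := Q) (by omega) (by simp [hcomp])]
    norm_num
  have hanti_comp : Q.comp (restrictToLine ![1, -1] lam)
      = Polynomial.C 4 * (Polynomial.X ^ 4 + Polynomial.C a₁ * Polynomial.X ^ 2) := by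
    rw [hcomp, hf, C_ofNat]
    simp only [Matrix.cons_val_zero, Matrix.cons_val_one, Matrix.cons_val_fin_one, map_one,
      map_neg, one_mul, neg_mul, add_comp, mul_comp, pow_comp, X_comp, C_comp]
    ring
  have hanti : (restrictToLine ![1, -1] lam).coeff 1 = 0 := by
    refine coeff_one_eq_zero_of_coeff_three_comp h2 hQ ?_ ?_
    · rw [hanti_comp]
      compute_degree!
      rw [show (4 : k) = 2 * 2 by norm_num]
      exact mul_ne_zero h2 h2
    · simp [hanti_comp, Polynomial.coeff_X_pow]
  rw [coeff_restrictToLine] at hdiag hanti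
  exact homogeneousComponent_one_eq_zero_of_eval h2 lam hdiag hanti

/-- Characteristic 3 case: for a monic cubic `f = x³ + a₂x² + a₁x + a₀` over an
algebraically closed field `k` of characteristic 3, if `(x-y)²·f̃(x,y) = Q(λ(x,y))`
for some `Q` of degree 2, then the degree-1 homogeneous component of `λ` vanishes. -/
theorem stmt12 (k : Type*) [Field k] [IsAlgClosed k] [CharP k 3]
    (a₂ a₁ a₀ : k)
    (f : Polynomial k)
    (hf : f = Polynomial.X ^ 3 + Polynomial.C a₂ * Polynomial.X ^ 2
        + Polynomial.C a₁ * Polynomial.X + Polynomial.C a₀)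
    (ft lam : MvPolynomial (Fin 2) k)
    (hft : (MvPolynomial.X 0 - MvPolynomial.X 1) * ft
        = Polynomial.aeval (MvPolynomial.X 0) f - Polynomial.aeval (MvPolynomial.X 1) f)
    (Q : Polynomial k) (hQ : Q.natDegree = 2)
    (heq : (MvPolynomial.X 0 - MvPolynomial.X 1) ^ 2 * ft = Polynomial.aeval lam Q) :
    MvPolynomial.homogeneousComponent 1 lam = 0 :=
  stmt12_general k a₂ a₁ a₀ f hf ft lam hft Q hQ heq
end

section
/- Let p be a prime, k the algebraic closure of F_p, and f ∈ k[x] of degree d = p^a·N with p ∤ N and N > 1. Suppose a_d·(x-1)^e·(x^{d-1}+x^{d-2}+...+1) = b₀·μ(x)^m in k[x] for some polynomial μ, constants a_d, b₀ ≠ 0, integer m ≥ 2, and e ∈ {0,2} with m dividing e + d - 1. Then this leads to a contradiction; i.e., no such factorization exists unless N = 1 (d is a power of p). -/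
/-!
Let `ζ ≠ 1` be a primitive `N`-th root of unity, which exists because `p ∤ N`. In characteristic
`p`, `(X - 1) · ∑_{i<d} X^i = X^d - 1 = (X^N - 1)^(p^a)`, and `ζ` is a simple root of `X^N - 1`,
so `ζ` is a root of the left-hand side of multiplicity exactly `p^a`, while its multiplicity in
`b₀ μ^m` is divisible by `m`. Hence `m ∣ p^a ∣ d`, which is incompatible with `m ∣ d ± 1`
for `m ≥ 2`.
-/

open Polynomial

section RootMultiplicity

variable {K : Type*} [Field K]

theorem IsPrimitiveRoot.rootMultiplicity_X_pow_sub_one {ζ : K} {N : ℕ}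
    (hζ : IsPrimitiveRoot ζ N) (hN : 0 < N) : rootMultiplicity ζ (X ^ N - 1 : K[X]) = 1 := by
  classical
  rw [← count_roots, ← C_1, ← nthRoots]
  exact Multiset.count_eq_one_of_mem hζ.nthRoots_one_nodup ((mem_nthRoots hN).2 hζ.pow_eq_one)

theorem IsPrimitiveRoot.rootMultiplicity_geom_sum_expChar_pow_mul (p : ℕ) [ExpChar K p]
    {ζ : K} {N : ℕ} (hζ : IsPrimitiveRoot ζ N) (hζ1 : ζ ≠ 1) (hN : 0 < N) (a : ℕ) :
    rootMultiplicity ζ (∑ i ∈ Finset.range (p ^ a * N), (X : K[X]) ^ i) = p ^ a := by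
  classical
  have hfrob : (X : K[X]) ^ (p ^ a * N) - 1 = (X ^ N - 1) ^ p ^ a := by
    rw [sub_pow_expChar_pow, one_pow, ← pow_mul, mul_comm]
  have hne : (X : K[X]) ^ N - 1 ≠ 0 := by simpa using X_pow_sub_C_ne_zero hN (1 : K)
  have hmul := geom_sum_mul (X : K[X]) (p ^ a * N)
  rw [hfrob] at hmul
  have hmult := rootMultiplicity_mul (x := ζ) (hmul ▸ pow_ne_zero _ hne)
  have hX1 : rootMultiplicity ζ (X - 1 : K[X]) = 0 := by
    rw [← C_1, rootMultiplicity_X_sub_C, if_neg hζ1]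
  rwa [hmul, hX1, add_zero, ← count_roots, roots_pow,
    Multiset.count_nsmul, count_roots, hζ.rootMultiplicity_X_pow_sub_one hN, mul_one,
    eq_comm] at hmult

theorem dvd_rootMultiplicity_C_mul_pow {b : K} {μ : K[X]} {m : ℕ} (h : C b * μ ^ m ≠ 0) (x : K) :
    m ∣ rootMultiplicity x (C b * μ ^ m) := by
  classical
  rw [rootMultiplicity_mul h, rootMultiplicity_C, zero_add, ← count_roots, roots_pow,
    Multiset.count_nsmul]
  exact dvd_mul_right m _

end RootMultiplicity

theorem Nat.eq_one_of_dvd_of_dvd_add_sub_one {m d e : ℕ} (hd : 0 < d) (he : e = 0 ∨ e = 2)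
    (hmd : m ∣ d) (hme : m ∣ e + d - 1) : m = 1 := by
  rcases he with rfl | rfl
  · rw [zero_add] at hme
    simpa [Nat.sub_sub_self hd] using Nat.dvd_sub hmd hme
  · rw [show 2 + d - 1 = d + 1 by omega] at hme
    exact Nat.dvd_one.mp ((Nat.dvd_add_right hmd).mp hme)

theorem stmt13_general (p : ℕ) (hp : p.Prime) (k : Type*) [Field k] [IsAlgClosed k] [CharP k p]
    (a N : ℕ) (hN : ¬ p ∣ N) (hN1 : 1 < N)
    (d : ℕ) (hd : d = p ^ a * N)
    (ad b₀ : k) (had : ad ≠ 0)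
    (m e : ℕ) (hm : 2 ≤ m) (he : e = 0 ∨ e = 2) (hdvd : m ∣ e + d - 1)
    (μ : Polynomial k)
    (heq : C ad * (X - 1) ^ e * ∑ i ∈ Finset.range d, X ^ i = C b₀ * μ ^ m) :
    False := by
  subst hd
  have := Fact.mk hp
  have : NeZero (N : k) := ⟨fun h => hN ((CharP.cast_eq_zero_iff k p N).mp h)⟩
  obtain ⟨ζ, hζ⟩ := HasEnoughRootsOfUnity.exists_primitiveRoot k N
  have hζ1 : ζ ≠ 1 := hζ.ne_one hN1
  have hnot_root : ¬ (C ad * (X - 1) ^ e : k[X]).IsRoot ζ := by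
    simp [had, sub_eq_zero, hζ1]
  have hsum := hζ.rootMultiplicity_geom_sum_expChar_pow_mul p hζ1 (by omega) a
  have hlhs : C ad * (X - 1) ^ e * ∑ i ∈ Finset.range (p ^ a * N), X ^ i ≠ 0 := by
    refine mul_ne_zero (fun h => hnot_root (by simp [h])) fun h => ?_
    simp only [h, rootMultiplicity_zero] at hsum
    exact (pow_pos hp.pos a).ne hsum
  have hmult : rootMultiplicity ζ (C ad * (X - 1) ^ e * ∑ i ∈ Finset.range (p ^ a * N), X ^ i)
      = p ^ a := by
    rw [rootMultiplicity_mul hlhs, rootMultiplicity_eq_zero hnot_root, zero_add, hsum]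
  have hm_pow : m ∣ p ^ a := hmult ▸ heq ▸ dvd_rootMultiplicity_C_mul_pow (heq ▸ hlhs) ζ
  have hm1 := Nat.eq_one_of_dvd_of_dvd_add_sub_one (Nat.mul_pos (pow_pos hp.pos a) (by omega)) he
    (hm_pow.mul_right N) hdvd
  omega

/-- Key step: over an algebraically closed field of characteristic `p`, if
`d = p^a·N` with `p ∤ N`, `N > 1`, then there is no factorization
`a_d·(x-1)^e·(x^{d-1} + ... + 1) = b₀·μ(x)^m` with `a_d, b₀ ≠ 0`, `m ≥ 2`,
`e ∈ {0,2}`, and `m ∣ e + d - 1`. -/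
theorem stmt13 (p : ℕ) (hp : p.Prime) (k : Type*) [Field k] [IsAlgClosed k] [CharP k p]
    (a N : ℕ) (hN : ¬ p ∣ N) (hN1 : 1 < N)
    (d : ℕ) (hd : d = p ^ a * N)
    (ad b₀ : k) (had : ad ≠ 0) (hb₀ : b₀ ≠ 0)
    (m e : ℕ) (hm : 2 ≤ m) (he : e = 0 ∨ e = 2) (hdvd : m ∣ e + d - 1)
    (μ : Polynomial k)
    (heq : C ad * (X - 1) ^ e * ∑ i ∈ Finset.range d, X ^ i = C b₀ * μ ^ m) :
    False :=
  stmt13_general p hp k a N hN hN1 d hd ad b₀ had m e hm he hdvd μ heq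
end

section
/- Let R be a commutative ring, and α₀, β₀, ..., α_n, β_n ∈ R such that the ideal generated by {αᵢβⱼ − αⱼβᵢ : i < j} is the unit ideal. Then the R-algebra homomorphism R[x₀,...,x_n] → R[u,v] sending xᵢ ↦ αᵢu + βᵢv is surjective. -/
open MvPolynomial

/-- If the `αᵢβⱼ - αⱼβᵢ` (`i < j`) generate the unit ideal of a commutative ring `R`,
then the `R`-algebra map `R[x₀,...,x_n] → R[u,v]`, `xᵢ ↦ αᵢu + βᵢv`, is surjective. -/
theorem stmt19 (R : Type*) [CommRing R] (n : ℕ) (α β : Fin (n + 1) → R)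
    (h : Ideal.span {r : R | ∃ i j : Fin (n + 1), i < j ∧ r = α i * β j - α j * β i} = ⊤) :
    Function.Surjective
      (MvPolynomial.aeval (fun i : Fin (n + 1) =>
          MvPolynomial.C (α i) * MvPolynomial.X 0 + MvPolynomial.C (β i) * MvPolynomial.X 1) :
        MvPolynomial (Fin (n + 1)) R →ₐ[R] MvPolynomial (Fin 2) R) := by
  set f : Fin (n + 1) → MvPolynomial (Fin 2) R :=
    fun i => C (α i) * X 0 + C (β i) * X 1 with hf
  set A := (aeval f : MvPolynomial (Fin (n + 1)) R →ₐ[R] MvPolynomial (Fin 2) R).range with hA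
  have hmem : ∀ i, f i ∈ A := fun i => ⟨X i, by simp⟩
  have hC : ∀ r : R, (C r : MvPolynomial (Fin 2) R) ∈ A := fun r => by
    simpa [MvPolynomial.algebraMap_eq] using A.algebraMap_mem r
  have key : ∀ p : MvPolynomial (Fin 2) R,
      (∀ r ∈ {r : R | ∃ i j : Fin (n + 1), i < j ∧ r = α i * β j - α j * β i},
        C r * p ∈ A) → p ∈ A := by
    intro p hp
    let ℓ : R →ₗ[R] MvPolynomial (Fin 2) R :=
      { toFun := fun r => C r * p
        map_add' := fun r s => by simp [map_add]; ring
        map_smul' := fun a r => by simp [smul_eq_mul, map_mul, Algebra.smul_def, MvPolynomial.algebraMap_eq]; ring }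
    have hle : Ideal.span {r : R | ∃ i j : Fin (n + 1), i < j ∧ r = α i * β j - α j * β i}
        ≤ Submodule.comap ℓ (Subalgebra.toSubmodule A) := by
      rw [Ideal.span_le]
      intro r hr
      exact hp r hr
    rw [h] at hle
    have h1 : (1 : R) ∈ Submodule.comap ℓ (Subalgebra.toSubmodule A) := hle trivial
    simpa [ℓ] using h1
  have h0 : (X 0 : MvPolynomial (Fin 2) R) ∈ A := by
    apply key
    rintro r ⟨i, j, -, rfl⟩
    have : C (α i * β j - α j * β i) * (X 0 : MvPolynomial (Fin 2) R)
        = C (β j) * f i - C (β i) * f j := by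
      simp only [hf, map_sub, map_mul]; ring
    rw [this]
    exact sub_mem (mul_mem (hC _) (hmem i)) (mul_mem (hC _) (hmem j))
  have h1 : (X 1 : MvPolynomial (Fin 2) R) ∈ A := by
    apply key
    rintro r ⟨i, j, -, rfl⟩
    have : C (α i * β j - α j * β i) * (X 1 : MvPolynomial (Fin 2) R)
        = C (α i) * f j - C (α j) * f i := by
      simp only [hf, map_sub, map_mul]; ring
    rw [this]
    exact sub_mem (mul_mem (hC _) (hmem j)) (mul_mem (hC _) (hmem i))
  have htop : A = ⊤ := by
    rw [eq_top_iff, ← MvPolynomial.adjoin_range_X]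
    apply Algebra.adjoin_le
    rintro _ ⟨k, rfl⟩
    fin_cases k
    · exact h0
    · exact h1
  intro q
  have : q ∈ A := htop ▸ Algebra.mem_top
  exact this
end
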